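/- Let n ∈ ℕ with n ≥ 1 and k ∈ ℝ with k ≥ 0 and kn − n/2 > −1/2. For every ℓ ∈ ℕ with ℓ ≥ 1 there exist real constants c_{1,ℓ}, …, c_{ℓ,ℓ} (depending only on k, n, ℓ) such that for all x, y ∈ ℝ with xy ≠ 0, the ℓ-th iterate of the Euler operator x ∂/∂x (acting in the variable x) satisfies (x ∂/∂x)^ℓ j_{kn−n/2}(n|xy|^{1/n}) = Σ_{j=1}^ℓ c_{j,ℓ} |xy|^{2j/n} j_{kn−n/2+j}(n|xy|^{1/n}). -/

import Mathlib

open MeasureTheory Real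
open scoped ENNReal NNReal

noncomputable section

/-- Euler operator `g ↦ x g'(x)` on real-valued functions. -/
def eulerR (f : ℝ → ℝ) (x : ℝ) : ℝ := x * deriv f x

/-- The normalized Bessel function `j_ν`. -/
def besselJ (ν : ℝ) (z : ℝ) : ℝ :=
  Real.Gamma (ν + 1) *
    ∑' m : ℕ, ((-1 : ℝ) ^ m / ((m.factorial : ℝ) * Real.Gamma (ν + (m : ℝ) + 1))) *
      (z / 2) ^ (2 * m)

/-!
Termwise differentiation of the defining series gives `j_ν'(z) = -z/(2(ν+1)) j_{ν+1}(z)`.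
The Euler operator multiplies `|xy|^q` by `q` and `z = n|xy|^{1/n}` by `1/n`, so it sends
`T_j = |xy|^{2j/n} j_{ν+j}(z)` to `(2j/n) T_j - n/(2(ν+j+1)) T_{j+1}`. Hence the `ℓ`-th iterate
applied to `T_0` is a combination of `T_0, …, T_ℓ` whose coefficients obey a two-term recursion,
and the coefficient of `T_0` vanishes after the first step because `2·0/n = 0`.
-/

open Topology Finset
open scoped Nat

theorem hasDerivAt_tsum_mul_pow {a : ℕ → ℝ} {K : ℝ} (ha : ∀ m, |a m| ≤ K / m !) (w : ℝ) :
    HasDerivAt (fun w => ∑' m, a m * w ^ m) (∑' m, (m + 1) * a (m + 1) * w ^ m) w := by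
  set R := |w| + 1
  have hR : 1 ≤ R := by simp [R]
  have hbound : ∀ m, ∀ t ∈ Metric.ball (0 : ℝ) R,
      ‖a m * (m * t ^ (m - 1))‖ ≤ K * (2 * R) ^ m / m ! := by
    intro m t ht
    rw [mem_ball_zero_iff, norm_eq_abs] at ht
    have hm : (m : ℝ) ≤ 2 ^ m := mod_cast (Nat.lt_two_pow_self).le
    have ht' : |t| ^ (m - 1) ≤ R ^ m :=
      (pow_le_pow_left₀ (abs_nonneg t) ht.le _).trans (pow_le_pow_right₀ hR (Nat.sub_le m 1))
    calc ‖a m * (m * t ^ (m - 1))‖ = |a m| * (m * |t| ^ (m - 1)) := by simp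
      _ ≤ K / m ! * (2 ^ m * R ^ m) := by
          gcongr
          · exact (abs_nonneg _).trans (ha m)
          · exact ha m
      _ = K * (2 * R) ^ m / m ! := by rw [mul_pow]; ring
  have hsum : Summable fun m => K * (2 * R) ^ m / m ! := by
    simpa only [mul_div_assoc] using (summable_pow_div_factorial (2 * R)).mul_left K
  have hw : w ∈ Metric.ball (0 : ℝ) R := by simp [R]
  have hderiv := hasDerivAt_tsum_of_isPreconnected hsum Metric.isOpen_ball
    (convex_ball 0 R).isPreconnected (fun m t _ => (hasDerivAt_pow m t).const_mul (a m)) hbound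
    (Metric.mem_ball_self (by linarith))
    (summable_of_ne_finset_zero (s := {0}) fun m hm => by simp_all) hw
  refine hderiv.congr_deriv ?_
  rw [(Summable.of_norm_bounded hsum fun m => hbound m w hw).tsum_eq_zero_add]
  simp [mul_assoc, mul_left_comm]

section Bessel

variable {ν : ℝ}

def besselCoeff (ν : ℝ) (m : ℕ) : ℝ := (-1) ^ m / (m ! * Gamma (ν + m + 1))

theorem besselJ_eq_tsum (ν z : ℝ) :
    besselJ ν z = Gamma (ν + 1) * ∑' m, besselCoeff ν m * ((z / 2) ^ 2) ^ m := by
  simp only [besselJ, besselCoeff, ← pow_mul]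

theorem min_Gamma_le_Gamma_add_nat (hν : -1 < ν) (m : ℕ) :
    min (Gamma (ν + 1)) (Gamma (ν + 2)) ≤ Gamma (ν + m + 1) := by
  cases m with
  | zero => simp
  | succ m =>
    have hmono : Monotone fun p : ℕ => Gamma (ν + p + 2) := by
      refine monotone_nat_of_le_succ fun p => ?_
      have hp : (1 : ℝ) ≤ ν + p + 2 := by linarith [(p.cast_nonneg : (0 : ℝ) ≤ p)]
      rw [show ν + ↑(p + 1) + 2 = ν + p + 2 + 1 by push_cast; ring,
        Gamma_add_one (by linarith)]
      exact le_mul_of_one_le_left (Gamma_pos_of_pos (by linarith)).le hp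
    calc min (Gamma (ν + 1)) (Gamma (ν + 2)) ≤ Gamma (ν + (0 : ℕ) + 2) := by simp
      _ ≤ Gamma (ν + m + 2) := hmono (Nat.zero_le m)
      _ = Gamma (ν + ↑(m + 1) + 1) := by push_cast; ring_nf

theorem abs_besselCoeff_le (hν : -1 < ν) (m : ℕ) :
    |besselCoeff ν m| ≤ (min (Gamma (ν + 1)) (Gamma (ν + 2)))⁻¹ / m ! := by
  have hmin : 0 < min (Gamma (ν + 1)) (Gamma (ν + 2)) :=
    lt_min (Gamma_pos_of_pos (by linarith)) (Gamma_pos_of_pos (by linarith))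
  have hΓ := min_Gamma_le_Gamma_add_nat hν m
  have hpos : 0 < Gamma (ν + m + 1) := hmin.trans_le hΓ
  rw [besselCoeff, abs_div, abs_pow, abs_neg, abs_one, one_pow, abs_of_pos (by positivity),
    one_div, mul_inv, mul_comm, ← div_eq_mul_inv]
  gcongr

theorem succ_mul_besselCoeff_succ (hν : -1 < ν) (m : ℕ) :
    (m + 1) * besselCoeff ν (m + 1) = -besselCoeff (ν + 1) m := by
  have hpos : 0 < ν + m + 1 := by linarith [(m.cast_nonneg : (0 : ℝ) ≤ m)]
  rw [besselCoeff, besselCoeff, Nat.factorial_succ,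
    show ν + ↑(m + 1) + 1 = ν + m + 1 + 1 by push_cast; ring, Gamma_add_one hpos.ne',
    show ν + 1 + m + 1 = ν + m + 1 + 1 by ring, Gamma_add_one hpos.ne']
  have := (Gamma_pos_of_pos hpos).ne'
  push_cast
  field_simp
  ring

theorem hasDerivAt_besselJ (hν : -1 < ν) (z : ℝ) :
    HasDerivAt (besselJ ν) (-(z / (2 * (ν + 1))) * besselJ (ν + 1) z) z := by
  have hsq : HasDerivAt (fun z => (z / 2) ^ 2) (z / 2) z := by
    refine (((hasDerivAt_id' z).div_const 2).fun_pow 2).congr_deriv ?_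
    ring
  have hseries := ((hasDerivAt_tsum_mul_pow (abs_besselCoeff_le hν) _).comp z hsq).const_mul
    (Gamma (ν + 1))
  rw [show besselJ ν = _ from funext (besselJ_eq_tsum ν)]
  refine hseries.congr_deriv ?_
  have hν1 : ν + 1 ≠ 0 := by linarith
  simp only [succ_mul_besselCoeff_succ hν, neg_mul, tsum_neg]
  rw [besselJ_eq_tsum, Gamma_add_one hν1]
  field_simp

end Bessel

theorem hasDerivAt_abs_mul_rpow {x y : ℝ} (hxy : x * y ≠ 0) (q : ℝ) :
    HasDerivAt (fun t => |t * y| ^ q) (q * |x * y| ^ q / x) x := by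
  have hx : x ≠ 0 := left_ne_zero_of_mul hxy
  have habs : |x * y| ≠ 0 := abs_ne_zero.mpr hxy
  have hinner : HasDerivAt (fun t => |t * y|) (SignType.sign (x * y) * y) x :=
    (hasDerivAt_abs hxy).comp (h := (· * y)) x (hasDerivAt_mul_const y)
  refine (hinner.rpow_const (Or.inl habs)).congr_deriv ?_
  rw [rpow_sub_one habs]
  field_simp
  rw [← sign_mul_self (x * y)]
  ring

section EulerBessel

variable {ν : ℝ} {n : ℕ} {x y : ℝ}

def besselTerm (ν : ℝ) (n : ℕ) (y : ℝ) (j : ℕ) (t : ℝ) : ℝ :=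
  |t * y| ^ (2 * (j : ℝ) / n) * besselJ (ν + j) (n * |t * y| ^ (1 / (n : ℝ)))

theorem hasDerivAt_besselTerm (hν : -1 < ν) (hn : n ≠ 0) (hxy : x * y ≠ 0) (j : ℕ) :
    HasDerivAt (besselTerm ν n y j)
      ((2 * j / n * besselTerm ν n y j x
        - n / (2 * (ν + j + 1)) * besselTerm ν n y (j + 1) x) / x) x := by
  have hx : x ≠ 0 := left_ne_zero_of_mul hxy
  have hn' : (n : ℝ) ≠ 0 := Nat.cast_ne_zero.mpr hn
  have hνj : ν + j + 1 ≠ 0 := by linarith [(j.cast_nonneg : (0 : ℝ) ≤ j)]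
  have habs : 0 < |x * y| := abs_pos.mpr hxy
  have hz := (hasDerivAt_besselJ (by linarith [(j.cast_nonneg : (0 : ℝ) ≤ j)] : -1 < ν + j)
    _).comp x ((hasDerivAt_abs_mul_rpow hxy (1 / n)).const_mul (n : ℝ))
  refine ((hasDerivAt_abs_mul_rpow hxy _).mul hz).congr_deriv ?_
  have hpow : |x * y| ^ (2 * ((j + 1 : ℕ) : ℝ) / n) =
      |x * y| ^ (2 * (j : ℝ) / n) * |x * y| ^ (1 / (n : ℝ)) * |x * y| ^ (1 / (n : ℝ)) := by
    rw [← rpow_add habs, ← rpow_add habs]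
    congr 1
    push_cast
    field_simp
    ring
  simp only [besselTerm, hpow, Function.comp_apply]
  push_cast [← add_assoc]
  field_simp
  ring

theorem eulerR_eq_sum_of_eventuallyEq_sum_besselTerm (hν : -1 < ν) (hn : n ≠ 0)
    (hxy : x * y ≠ 0) {f : ℝ → ℝ} {c : ℕ → ℝ} {s : Finset ℕ}
    (hf : f =ᶠ[𝓝 x] fun t => ∑ j ∈ s, c j * besselTerm ν n y j t) :
    eulerR f x = ∑ j ∈ s, c j *
      (2 * j / n * besselTerm ν n y j x - n / (2 * (ν + j + 1)) * besselTerm ν n y (j + 1) x) := by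
  have hx : x ≠ 0 := left_ne_zero_of_mul hxy
  rw [eulerR, hf.deriv_eq,
    (HasDerivAt.fun_sum fun j _ => (hasDerivAt_besselTerm hν hn hxy j).const_mul (c j)).deriv,
    mul_sum]
  refine sum_congr rfl fun j _ => ?_
  field_simp

end EulerBessel

/-- `eulerBesselCoeff ν n ℓ j` is the paper's `c_{j,ℓ}`. -/
def eulerBesselCoeff (ν : ℝ) (n : ℕ) : ℕ → ℕ → ℝ
  | 0, j => if j = 0 then 1 else 0
  | _ + 1, 0 => 0
  | ℓ + 1, j + 1 => 2 * (j + 1) / n * eulerBesselCoeff ν n ℓ (j + 1)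
      - n / (2 * (ν + j + 1)) * eulerBesselCoeff ν n ℓ j

theorem eulerBesselCoeff_eq_zero_of_lt {ν : ℝ} {n ℓ j : ℕ} (h : ℓ < j) :
    eulerBesselCoeff ν n ℓ j = 0 := by
  induction ℓ generalizing j with
  | zero => simp [eulerBesselCoeff, h.ne']
  | succ ℓ ih =>
    obtain ⟨j, rfl⟩ := Nat.exists_eq_add_one_of_ne_zero (by omega : j ≠ 0)
    simp [eulerBesselCoeff, ih (by omega : ℓ < j), ih (by omega : ℓ < j + 1)]

theorem sum_eulerBesselCoeff_succ (ν : ℝ) (n ℓ : ℕ) (G : ℕ → ℝ) :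
    ∑ j ∈ range (ℓ + 2), eulerBesselCoeff ν n (ℓ + 1) j * G j =
      ∑ j ∈ range (ℓ + 1), eulerBesselCoeff ν n ℓ j *
        (2 * j / n * G j - n / (2 * (ν + j + 1)) * G (j + 1)) := by
  have hlast : eulerBesselCoeff ν n ℓ (ℓ + 1) = 0 := eulerBesselCoeff_eq_zero_of_lt (lt_add_one ℓ)
  rw [sum_range_succ']
  simp only [eulerBesselCoeff, mul_sub, sub_mul, sum_sub_distrib]
  rw [sum_range_succ (fun j => 2 * (j + 1 : ℝ) / n * _ * _) ℓ, hlast,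
    sum_range_succ' (fun j => eulerBesselCoeff ν n ℓ j * _)]
  push_cast
  simp only [zero_mul, mul_zero, zero_div, add_zero]
  congr 1 <;> exact sum_congr rfl fun j _ => by ring

theorem iterate_eulerR_besselTerm_zero {ν : ℝ} {n : ℕ} (hν : -1 < ν) (hn : n ≠ 0)
    (ℓ : ℕ) {x y : ℝ} (hxy : x * y ≠ 0) :
    eulerR^[ℓ] (besselTerm ν n y 0) x =
      ∑ j ∈ range (ℓ + 1), eulerBesselCoeff ν n ℓ j * besselTerm ν n y j x := by
  induction ℓ generalizing x with
  | zero => simp [eulerBesselCoeff]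
  | succ ℓ ih =>
    rw [Function.iterate_succ_apply', sum_eulerBesselCoeff_succ]
    refine eulerR_eq_sum_of_eventuallyEq_sum_besselTerm hν hn hxy ?_
    filter_upwards [(continuousAt_id.mul continuousAt_const).eventually_ne hxy] with t ht
    exact ih ht

theorem euler_iterate_besselJ_even_general (n : ℕ) (hn : 1 ≤ n) (k : ℝ)
    (hkn : k * n - (n : ℝ) / 2 > -(1 / 2)) (ℓ : ℕ) (hℓ : 1 ≤ ℓ) :
    ∃ c : ℕ → ℝ, ∀ x y : ℝ, x * y ≠ 0 →
      (eulerR)^[ℓ]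
          (fun t : ℝ => besselJ (k * n - (n : ℝ) / 2) ((n : ℝ) * |t * y| ^ (1 / (n : ℝ)))) x =
        ∑ j ∈ Finset.Icc 1 ℓ, c j * |x * y| ^ (2 * (j : ℝ) / (n : ℝ)) *
          besselJ (k * n - (n : ℝ) / 2 + j) ((n : ℝ) * |x * y| ^ (1 / (n : ℝ))) := by
  set ν := k * n - (n : ℝ) / 2
  have hν : -1 < ν := by linarith
  obtain ⟨m, rfl⟩ : ∃ m, ℓ = m + 1 := ⟨ℓ - 1, by omega⟩
  refine ⟨eulerBesselCoeff ν n (m + 1), fun x y hxy => ?_⟩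
  have hterm : (fun t => besselJ ν (n * |t * y| ^ (1 / (n : ℝ)))) = besselTerm ν n y 0 := by
    funext t
    simp [besselTerm]
  rw [hterm, iterate_eulerR_besselTerm_zero hν (by omega) _ hxy, range_eq_Ico,
    sum_eq_sum_Ico_succ_bot (by omega), Ico_add_one_right_eq_Icc]
  simp [eulerBesselCoeff, besselTerm, mul_assoc]

/-- Iterates of the Euler operator applied to `j_{kn-n/2}(n|xy|^{1/n})` (in `x`) are
linear combinations `Σ_{j=1}^ℓ c_{j,ℓ} |xy|^{2j/n} j_{kn-n/2+j}(n|xy|^{1/n})`. -/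
theorem euler_iterate_besselJ_even (n : ℕ) (hn : 1 ≤ n) (k : ℝ) (hk : 0 ≤ k)
    (hkn : k * n - (n : ℝ) / 2 > -(1 / 2)) (ℓ : ℕ) (hℓ : 1 ≤ ℓ) :
    ∃ c : ℕ → ℝ, ∀ x y : ℝ, x * y ≠ 0 →
      (eulerR)^[ℓ]
          (fun t : ℝ => besselJ (k * n - (n : ℝ) / 2) ((n : ℝ) * |t * y| ^ (1 / (n : ℝ)))) x =
        ∑ j ∈ Finset.Icc 1 ℓ, c j * |x * y| ^ (2 * (j : ℝ) / (n : ℝ)) *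
          besselJ (k * n - (n : ℝ) / 2 + j) ((n : ℝ) * |x * y| ^ (1 / (n : ℝ))) :=
  euler_iterate_besselJ_even_general n hn k hkn ℓ hℓ

end
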